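/- arXiv:1404.0500 — 7 statements merged into one kernel-verified Lean document; each statement's English description precedes it below -/
import Mathlib

section
/- A subset K of X is q-compact if and only if the set K + θ(0) = {k + w : k ∈ K, w ∈ θ(0)} is q-compact. -/
open Set Pointwise

/-- Open ball of an asymmetric norm. -/
def asymBall {X : Type*} [AddCommGroup X] (q : X → ℝ) (x : X) (ε : ℝ) : Set X :=
  {y | q (y - x) < ε}

/-- Closed ball of an asymmetric norm. -/
def asymClosedBall {X : Type*} [AddCommGroup X] (q : X → ℝ) (x : X) (ε : ℝ) : Set X :=
  {y | q (y - x) ≤ ε}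

/-- The topology τ_q generated by the open balls of `q`. -/
def tauQ {X : Type*} [AddCommGroup X] (q : X → ℝ) : TopologicalSpace X :=
  TopologicalSpace.generateFrom {S | ∃ x ε, 0 < ε ∧ S = asymBall q x ε}

/-- The associated (symmetric) norm `q^s`. -/
def qs {X : Type*} [AddCommGroup X] (q : X → ℝ) : X → ℝ :=
  fun x => max (q x) (q (-x))

/-- The topology τ_{q^s} induced by the norm `q^s` (generated by its balls). -/
def tauQs {X : Type*} [AddCommGroup X] (q : X → ℝ) : TopologicalSpace X :=
  TopologicalSpace.generateFrom {S | ∃ x ε, 0 < ε ∧ S = {y | qs q (y - x) < ε}}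

/-- The set θ(0) = {x : q x = 0}. -/
def theta0 {X : Type*} [AddCommGroup X] (q : X → ℝ) : Set X :=
  {x | q x = 0}

/-- `x` is an extreme point of the convex set `A`. -/
def IsExtremePt {X : Type*} [AddCommGroup X] [Module ℝ X] (A : Set X) (x : X) : Prop :=
  x ∈ A ∧ ∀ y ∈ A, ∀ z ∈ A, ∀ l : ℝ, 0 < l → l < 1 →
    x = l • y + (1 - l) • z → x = y ∧ x = z

/-!
Every τ_q-open set is stable under translation by elements of θ(0), because the basic balls are
(`q (y + w - c) ≤ q (y - c) + q w`). Hence `k + w ⤳ k` for `k ∈ K`, `w ∈ θ(0)`, so `K + θ(0)` lies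
between `K` and the intersection of all neighbourhoods of `K`; such a set is compact exactly when
`K` is.
-/

open Topology in
theorem TopologicalSpace.mapsTo_of_isOpen_generateFrom {α : Type*} {g : Set (Set α)} {f : α → α}
    (hg : ∀ s ∈ g, MapsTo f s s) {u : Set α} (hu : IsOpen[generateFrom g] u) : MapsTo f u u := by
  induction hu with
  | basic s hs => exact hg s hs
  | univ => exact mapsTo_univ f univ
  | inter s t _ _ hs ht => exact hs.inter_inter ht
  | sUnion S _ hS =>
    rintro x ⟨s, hsS, hxs⟩
    exact ⟨s, hsS, hS s hsS hxs⟩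

theorem isCompact_iff_of_subset_of_subset_nhdsKer {X : Type*} [TopologicalSpace X] {s t : Set X}
    (hst : s ⊆ t) (hts : t ⊆ nhdsKer s) : IsCompact s ↔ IsCompact t := by
  have : nhdsKer t = nhdsKer s :=
    subset_antisymm (by simpa using nhdsKer_mono hts) (nhdsKer_mono hst)
  rw [← IsCompact.nhdsKer_iff, ← this, IsCompact.nhdsKer_iff]

section AsymmetricNorm

variable {X : Type*} [AddCommGroup X] {q : X → ℝ}

theorem mapsTo_add_asymBall (hqtri : ∀ x y, q (x + y) ≤ q x + q y) {w : X} (hw : q w = 0)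
    (c : X) (ε : ℝ) : MapsTo (· + w) (asymBall q c ε) (asymBall q c ε) :=
  fun y (hy : q (y - c) < ε) ↦
  calc q (y + w - c) = q (y - c + w) := by rw [sub_add_eq_add_sub]
    _ ≤ q (y - c) + q w := hqtri _ _
    _ < ε := by rwa [hw, add_zero]

theorem specializes_add_of_eq_zero (hqtri : ∀ x y, q (x + y) ≤ q x + q y) (x : X) {w : X}
    (hw : q w = 0) : @Specializes X (tauQ q) (x + w) x := by
  let _ : TopologicalSpace X := tauQ q
  refine specializes_iff_forall_open.2 fun u hu hx ↦ ?_
  refine TopologicalSpace.mapsTo_of_isOpen_generateFrom (f := (· + w)) ?_ hu hx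
  rintro _ ⟨c, ε, -, rfl⟩
  exact mapsTo_add_asymBall hqtri hw c ε

end AsymmetricNorm

theorem stmt1_general {X : Type*} [AddCommGroup X] [Module ℝ X] (q : X → ℝ)
    (hqh : ∀ (t : ℝ) (x : X), 0 ≤ t → q (t • x) = t * q x)
    (hqtri : ∀ x y, q (x + y) ≤ q x + q y)
    (K : Set X) :
    @IsCompact X (tauQ q) K ↔ @IsCompact X (tauQ q) (K + theta0 q) := by
  let _ : TopologicalSpace X := tauQ q
  have hq0 : q 0 = 0 := by simpa using hqh 0 0 le_rfl
  refine isCompact_iff_of_subset_of_subset_nhdsKer (subset_add_left K hq0) ?_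
  rintro _ ⟨k, hk, w, hw, rfl⟩
  exact mem_nhdsKer_iff_specializes.2 ⟨k, hk, specializes_add_of_eq_zero hqtri k hw⟩

theorem stmt1 {X : Type*} [AddCommGroup X] [Module ℝ X] (q : X → ℝ)
    (hq0 : ∀ x, 0 ≤ q x)
    (hqh : ∀ (t : ℝ) (x : X), 0 ≤ t → q (t • x) = t * q x)
    (hqtri : ∀ x y, q (x + y) ≤ q x + q y)
    (hqsep : ∀ x, (q x = 0 ∧ q (-x) = 0) ↔ x = 0)
    (K : Set X) :
    @IsCompact X (tauQ q) K ↔ @IsCompact X (tauQ q) (K + theta0 q) :=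
  stmt1_general q hqh hqtri K
end

section
/- If K ⊆ X is q-compact, then the closure of K with respect to the topology τ_{q^s} is also q-compact. -/
open Set Pointwise

open Topology Filter

/-!
A point `y` of the `q^s`-closure of `K` can be approximated from `K` in `q^s`, so the function
`x ↦ q (y - x)`, which is lower semicontinuous for `τ_q`, has infimum `0` on `K`; by compactness it
attains it at some `a ∈ K`. Then every `τ_q`-ball around `a` contains `y`, i.e. `y` specializes to
`a`, and a superset of a compact set all of whose points specialize into it is compact.
-/

theorem IsCompact.of_superset_of_forall_specializes {Y : Type*} [TopologicalSpace Y]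
    {s t : Set Y} (hs : IsCompact s) (hst : s ⊆ t) (h : ∀ y ∈ t, ∃ x ∈ s, y ⤳ x) :
    IsCompact t := by
  rw [isCompact_iff_finite_subcover]
  intro ι U hU hcov
  obtain ⟨u, hu⟩ := hs.elim_finite_subcover U hU (hst.trans hcov)
  refine ⟨u, fun y hy => ?_⟩
  obtain ⟨x, hx, hyx⟩ := h y hy
  exact hyx.mem_open (isOpen_biUnion fun i _ => hU i) (hu hx)

section AsymmetricNorm

variable {X : Type*} [AddCommGroup X] {q : X → ℝ}

theorem exists_asymBall_subset_of_isOpen (htri : ∀ x y, q (x + y) ≤ q x + q y) {U : Set X}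
    (hU : IsOpen[tauQ q] U) {x : X} (hx : x ∈ U) : ∃ ε > 0, asymBall q x ε ⊆ U := by
  induction hU generalizing x with
  | basic S hS =>
    obtain ⟨z, ε, -, rfl⟩ := hS
    have hxz : q (x - z) < ε := hx
    refine ⟨ε - q (x - z), by linarith, fun w (hw : q (w - x) < ε - q (x - z)) => ?_⟩
    have := htri (w - x) (x - z)
    rw [sub_add_sub_cancel] at this
    show q (w - z) < ε
    linarith
  | univ => exact ⟨1, one_pos, subset_univ _⟩
  | inter U V _ _ ihU ihV =>
    obtain ⟨ε₁, hε₁, h₁⟩ := ihU hx.1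
    obtain ⟨ε₂, hε₂, h₂⟩ := ihV hx.2
    refine ⟨min ε₁ ε₂, lt_min hε₁ hε₂, fun w (hw : q (w - x) < min ε₁ ε₂) => ⟨?_, ?_⟩⟩
    · exact h₁ (hw.trans_le (min_le_left _ _))
    · exact h₂ (hw.trans_le (min_le_right _ _))
  | sUnion S _ ih =>
    obtain ⟨U, hUS, hxU⟩ := hx
    obtain ⟨ε, hε, hsub⟩ := ih U hUS hxU
    exact ⟨ε, hε, hsub.trans (subset_sUnion_of_mem hUS)⟩

theorem asymBall_mem_nhds (h0 : q 0 = 0) (x : X) {ε : ℝ} (hε : 0 < ε) :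
    asymBall q x ε ∈ @nhds X (tauQ q) x :=
  @IsOpen.mem_nhds X (tauQ q) _ _ (.basic _ ⟨x, ε, hε, rfl⟩)
    (show q (x - x) < ε by rwa [sub_self, h0])

theorem lowerSemicontinuous_q_sub (h0 : q 0 = 0) (htri : ∀ x y, q (x + y) ≤ q x + q y) (y : X) :
    @LowerSemicontinuous X ℝ (tauQ q) _ fun z => q (y - z) := by
  intro x c hc
  filter_upwards [asymBall_mem_nhds h0 x (sub_pos.2 hc)] with z (hz : q (z - x) < q (y - x) - c)
  have := htri (y - z) (z - x)
  rw [sub_add_sub_cancel] at this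
  linarith

theorem exists_q_sub_lt_of_mem_closure (h0 : q 0 = 0) {K : Set X} {y : X}
    (hy : y ∈ closure[tauQs q] K) {ε : ℝ} (hε : 0 < ε) : ∃ x ∈ K, q (y - x) < ε := by
  have hball : IsOpen[tauQs q] {z | qs q (z - y) < ε} := .basic _ ⟨y, ε, hε, rfl⟩
  have hyball : qs q (y - y) < ε := by simpa [qs, h0] using hε
  obtain ⟨x, hxy, hxK⟩ := (@mem_closure_iff X (tauQs q) _ _).1 hy _ hball hyball
  refine ⟨x, hxK, lt_of_le_of_lt ?_ hxy⟩
  rw [← neg_sub x y]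
  exact le_max_right _ _

theorem exists_q_sub_nonpos_of_mem_closure (h0 : q 0 = 0) (htri : ∀ x y, q (x + y) ≤ q x + q y)
    {K : Set X} (hK : @IsCompact X (tauQ q) K) {y : X} (hy : y ∈ closure[tauQs q] K) :
    ∃ a ∈ K, q (y - a) ≤ 0 := by
  let := tauQ q
  obtain ⟨x₀, hx₀⟩ := exists_q_sub_lt_of_mem_closure h0 hy one_pos
  obtain ⟨a, haK, hmin⟩ := LowerSemicontinuousOn.exists_isMinOn ⟨x₀, hx₀.1⟩ hK
    ((lowerSemicontinuous_q_sub h0 htri y).lowerSemicontinuousOn K)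
  refine ⟨a, haK, le_of_forall_pos_lt_add fun ε hε => ?_⟩
  obtain ⟨x, hxK, hx⟩ := exists_q_sub_lt_of_mem_closure h0 hy hε
  simpa using (hmin hxK).trans_lt hx

theorem specializes_of_q_sub_nonpos (htri : ∀ x y, q (x + y) ≤ q x + q y) {y a : X}
    (hya : q (y - a) ≤ 0) : @Specializes X (tauQ q) y a := by
  refine (@specializes_iff_forall_open X (tauQ q) _ _).2 fun U hU haU => ?_
  obtain ⟨ε, hε, hsub⟩ := exists_asymBall_subset_of_isOpen htri hU haU
  exact hsub (show q (y - a) < ε by linarith)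

end AsymmetricNorm

theorem stmt4_general {X : Type*} [AddCommGroup X] [Module ℝ X] (q : X → ℝ)
    (hqh : ∀ (t : ℝ) (x : X), 0 ≤ t → q (t • x) = t * q x)
    (hqtri : ∀ x y, q (x + y) ≤ q x + q y)
    (K : Set X) (hK : @IsCompact X (tauQ q) K) :
    @IsCompact X (tauQ q) (@closure X (tauQs q) K) := by
  have h0 : q 0 = 0 := by simpa using hqh 0 0 le_rfl
  refine @IsCompact.of_superset_of_forall_specializes X (tauQ q) _ _ hK
    (@subset_closure X (tauQs q) K) fun y (hy : y ∈ closure[tauQs q] K) => ?_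
  obtain ⟨a, haK, hya⟩ := exists_q_sub_nonpos_of_mem_closure h0 hqtri hK hy
  exact ⟨a, haK, specializes_of_q_sub_nonpos hqtri hya⟩

theorem stmt4 {X : Type*} [AddCommGroup X] [Module ℝ X] (q : X → ℝ)
    (hq0 : ∀ x, 0 ≤ q x)
    (hqh : ∀ (t : ℝ) (x : X), 0 ≤ t → q (t • x) = t * q x)
    (hqtri : ∀ x y, q (x + y) ≤ q x + q y)
    (hqsep : ∀ x, (q x = 0 ∧ q (-x) = 0) ↔ x = 0)
    (K : Set X) (hK : @IsCompact X (tauQ q) K) :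
    @IsCompact X (tauQ q) (@closure X (tauQs q) K) :=
  stmt4_general q hqh hqtri K hK
end

section
/- If K ⊆ X is q-compact, then K contains no line; that is, there do not exist z ∈ X and y ∈ X with y ≠ 0 such that {z + t•y : t ∈ ℝ} ⊆ K. -/
open Set Pointwise

/-! Every ball `asymBall q z r` is τ_q-open, so `u ↦ q (u - z)` is upper semicontinuous for τ_q
and hence bounded above on a q-compact set. Along a line `z + t • y` with `y ≠ 0`, however,
`q (t • y)` is unbounded: separation gives `q y > 0` or `q (-y) > 0`, and positive homogeneity
then lets `t` go to `+∞` or `-∞`. -/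

open Topology

section AsymmetricNorm

variable {X : Type*} [AddCommGroup X] {q : X → ℝ}

theorem isOpen_asymBall (x : X) {ε : ℝ} (hε : 0 < ε) : IsOpen[tauQ q] (asymBall q x ε) :=
  TopologicalSpace.isOpen_generateFrom_of_mem ⟨x, ε, hε, rfl⟩

theorem upperSemicontinuous_asym_sub (hq0 : ∀ x, 0 ≤ q x) (z : X) :
    @UpperSemicontinuous X ℝ (tauQ q) _ fun u => q (u - z) := by
  let _ := tauQ q
  refine upperSemicontinuous_iff_isOpen_preimage.2 fun r => ?_
  rcases lt_or_ge 0 r with hr | hr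
  · exact isOpen_asymBall z hr
  · convert isOpen_empty
    exact eq_empty_of_forall_notMem fun u hu => (hq0 (u - z)).not_gt (lt_of_lt_of_le hu hr)

theorem IsCompact.bddAbove_asym_sub (hq0 : ∀ x, 0 ≤ q x) {K : Set X}
    (hK : @IsCompact X (tauQ q) K) (z : X) : BddAbove ((fun u => q (u - z)) '' K) :=
  let _ := tauQ q
  ((upperSemicontinuous_asym_sub hq0 z).upperSemicontinuousOn K).bddAbove_of_isCompact hK

variable [Module ℝ X]

theorem not_bddAbove_range_asym_smul_of_pos
    (hqh : ∀ (t : ℝ) (x : X), 0 ≤ t → q (t • x) = t * q x)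
    {c : X} (hc : 0 < q c) : ¬ BddAbove (range fun t : ℝ => q (t • c)) := by
  rintro ⟨R, hR⟩
  have ht : 0 ≤ (|R| + 1) / q c := by positivity
  have hle : q (((|R| + 1) / q c) • c) ≤ R := hR ⟨_, rfl⟩
  rw [hqh _ _ ht, div_mul_cancel₀ _ hc.ne'] at hle
  linarith [le_abs_self R]

theorem not_bddAbove_range_asym_smul (hq0 : ∀ x, 0 ≤ q x)
    (hqh : ∀ (t : ℝ) (x : X), 0 ≤ t → q (t • x) = t * q x)
    (hqsep : ∀ x, (q x = 0 ∧ q (-x) = 0) ↔ x = 0) {y : X} (hy : y ≠ 0) :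
    ¬ BddAbove (range fun t : ℝ => q (t • y)) := by
  rcases (hq0 y).lt_or_eq with hpos | hzero
  · exact not_bddAbove_range_asym_smul_of_pos hqh hpos
  have hneg : 0 < q (-y) :=
    (hq0 (-y)).lt_of_ne fun h => hy ((hqsep y).1 ⟨hzero.symm, h.symm⟩)
  refine fun hbdd => not_bddAbove_range_asym_smul_of_pos hqh hneg (hbdd.mono ?_)
  rintro _ ⟨t, rfl⟩
  exact ⟨-t, by simp⟩

end AsymmetricNorm

theorem stmt7_general {X : Type*} [AddCommGroup X] [Module ℝ X] (q : X → ℝ)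
    (hq0 : ∀ x, 0 ≤ q x)
    (hqh : ∀ (t : ℝ) (x : X), 0 ≤ t → q (t • x) = t * q x)
    (hqsep : ∀ x, (q x = 0 ∧ q (-x) = 0) ↔ x = 0)
    (K : Set X) (hK : @IsCompact X (tauQ q) K) :
    ¬ ∃ (z y : X), y ≠ 0 ∧ {p | ∃ t : ℝ, p = z + t • y} ⊆ K := by
  rintro ⟨z, y, hy, hline⟩
  refine not_bddAbove_range_asym_smul hq0 hqh hqsep hy ((hK.bddAbove_asym_sub hq0 z).mono ?_)
  rintro _ ⟨t, rfl⟩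
  exact ⟨z + t • y, hline ⟨t, rfl⟩, by simp⟩

theorem stmt7 {X : Type*} [AddCommGroup X] [Module ℝ X] (q : X → ℝ)
    (hq0 : ∀ x, 0 ≤ q x)
    (hqh : ∀ (t : ℝ) (x : X), 0 ≤ t → q (t • x) = t * q x)
    (hqtri : ∀ x y, q (x + y) ≤ q x + q y)
    (hqsep : ∀ x, (q x = 0 ∧ q (-x) = 0) ↔ x = 0)
    (K : Set X) (hK : @IsCompact X (tauQ q) K) :
    ¬ ∃ (z y : X), y ≠ 0 ∧ {p | ∃ t : ℝ, p = z + t • y} ⊆ K :=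
  stmt7_general q hq0 hqh hqsep K hK
end

section
/- If for some x, y, z ∈ X and ε > 0 the ray R = {t•x + y : t ≥ 0} is contained in the open ball B_q(z,ε), then the ray R' = {t•x : t ≥ 0} is contained in θ(0). -/
open Set Pointwise

lemma nonpos_of_forall_nonneg_mul_le {a D : ℝ} (h : ∀ t : ℝ, 0 ≤ t → t * a ≤ D) : a ≤ 0 := by
  by_contra! ha
  have key := h ((|D| + 1) / a) (by positivity)
  rw [div_mul_cancel₀ _ ha.ne'] at key
  linarith [le_abs_self D]

lemma eq_zero_of_bddAbove_on_ray {X : Type*} [AddCommGroup X] [Module ℝ X] {q : X → ℝ}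
    (hq0 : ∀ x, 0 ≤ q x)
    (hqh : ∀ (t : ℝ) (x : X), 0 ≤ t → q (t • x) = t * q x)
    (hqtri : ∀ x y, q (x + y) ≤ q x + q y)
    {x w : X} {C : ℝ} (h : ∀ t : ℝ, 0 ≤ t → q (t • x + w) ≤ C) : q x = 0 := by
  refine le_antisymm (nonpos_of_forall_nonneg_mul_le (D := C + q (-w)) fun t ht => ?_) (hq0 x)
  calc t * q x = q ((t • x + w) + -w) := by rw [add_neg_cancel_right, hqh t x ht]
    _ ≤ q (t • x + w) + q (-w) := hqtri _ _
    _ ≤ C + q (-w) := by gcongr; exact h t ht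

theorem stmt11_general {X : Type*} [AddCommGroup X] [Module ℝ X] (q : X → ℝ)
    (hq0 : ∀ x, 0 ≤ q x)
    (hqh : ∀ (t : ℝ) (x : X), 0 ≤ t → q (t • x) = t * q x)
    (hqtri : ∀ x y, q (x + y) ≤ q x + q y)
    (x y z : X) (ε : ℝ)
    (hR : {p | ∃ t : ℝ, 0 ≤ t ∧ p = t • x + y} ⊆ asymBall q z ε) :
    {p | ∃ t : ℝ, 0 ≤ t ∧ p = t • x} ⊆ theta0 q := by
  have hqx : q x = 0 := eq_zero_of_bddAbove_on_ray hq0 hqh hqtri (w := y - z) (C := ε)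
    fun t ht => by
      have hball : q (t • x + y - z) < ε := hR ⟨t, ht, rfl⟩
      simpa only [add_sub_assoc] using hball.le
  rintro p ⟨t, ht, rfl⟩
  show q (t • x) = 0
  rw [hqh t x ht, hqx, mul_zero]

theorem stmt11 {X : Type*} [AddCommGroup X] [Module ℝ X] (q : X → ℝ)
    (hq0 : ∀ x, 0 ≤ q x)
    (hqh : ∀ (t : ℝ) (x : X), 0 ≤ t → q (t • x) = t * q x)
    (hqtri : ∀ x y, q (x + y) ≤ q x + q y)
    (hqsep : ∀ x, (q x = 0 ∧ q (-x) = 0) ↔ x = 0)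
    (x y z : X) (ε : ℝ) (hε : 0 < ε)
    (hR : {p | ∃ t : ℝ, 0 ≤ t ∧ p = t • x + y} ⊆ asymBall q z ε) :
    {p | ∃ t : ℝ, 0 ≤ t ∧ p = t • x} ⊆ theta0 q :=
  stmt11_general q hq0 hqh hqtri x y z ε hR
end

section
/- If K ⊆ X is q-compact, then the set K + θ(0) = {k + w : k ∈ K, w ∈ θ(0)} is closed in the topology τ_{q^s}. -/
open Set Pointwise

/-!
For `x ∉ K + θ(0)` the map `k ↦ q (x - k)` is lower semicontinuous for `τ_q` (triangle
inequality), so it attains a minimum `δ` on the `q`-compact set `K`, and `δ > 0` because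
`x - k ∉ θ(0)`. If `q^s (y - x) < δ` and `y = k + w` with `q w = 0`, then
`q (x - k) ≤ q (x - y) + q w < δ`; hence the `q^s`-ball of radius `δ` about `x` misses `K + θ(0)`.
-/

open Topology

section

variable {X : Type*} [AddCommGroup X] {q : X → ℝ}

theorem apply_sub_le_qs_sub (x y : X) : q (x - y) ≤ qs q (y - x) := by
  rw [qs, neg_sub]
  exact le_max_right _ _

theorem triangle_sub (hqtri : ∀ x y, q (x + y) ≤ q x + q y) (x y z : X) :
    q (x - z) ≤ q (x - y) + q (y - z) := by
  simpa using hqtri (x - y) (y - z)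

theorem isOpen_tauQs_of_forall_ball_subset (hq00 : q 0 = 0) {U : Set X}
    (hU : ∀ x ∈ U, ∃ ε > 0, {y | qs q (y - x) < ε} ⊆ U) : IsOpen[tauQs q] U := by
  choose! ε hεpos hεU using hU
  have hUnion : U = ⋃ x ∈ U, {y | qs q (y - x) < ε x} := by
    refine Subset.antisymm (fun x hx => mem_biUnion hx ?_) (iUnion₂_subset hεU)
    simpa [qs, hq00] using hεpos x hx
  rw [hUnion]
  exact @isOpen_biUnion X X (tauQs q) _ _ fun x hx =>
    TopologicalSpace.GenerateOpen.basic _ ⟨x, ε x, hεpos x hx, rfl⟩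

theorem lowerSemicontinuous_sub_left (hq00 : q 0 = 0) (hqtri : ∀ x y, q (x + y) ≤ q x + q y)
    (x : X) : @LowerSemicontinuous X ℝ (tauQ q) _ fun k => q (x - k) := by
  intro k' r hr
  filter_upwards [@IsOpen.mem_nhds X (tauQ q) _ _ (isOpen_asymBall k' (sub_pos.2 hr))
    (by simp [asymBall, hq00, hr])] with k hk
  have hk : q (k - k') < q (x - k') - r := hk
  linarith [triangle_sub hqtri x k k']

theorem exists_pos_le_of_notMem_add_theta0 (hq0 : ∀ x, 0 ≤ q x) (hq00 : q 0 = 0)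
    (hqtri : ∀ x y, q (x + y) ≤ q x + q y) {K : Set X} (hK : @IsCompact X (tauQ q) K)
    (hKne : K.Nonempty) {x : X} (hx : x ∉ K + theta0 q) :
    ∃ δ > 0, ∀ k ∈ K, δ ≤ q (x - k) := by
  obtain ⟨k₀, hk₀, hmin⟩ := @LowerSemicontinuousOn.exists_isMinOn X ℝ (tauQ q) _ _ K hKne hK
    (@LowerSemicontinuous.lowerSemicontinuousOn X ℝ (tauQ q) _ _
      (lowerSemicontinuous_sub_left hq00 hqtri x) K)
  refine ⟨q (x - k₀), (hq0 _).lt_of_ne fun h => hx ?_, fun k hk => hmin hk⟩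
  exact ⟨k₀, hk₀, x - k₀, h.symm, add_sub_cancel _ _⟩

end

theorem stmt13_general {X : Type*} [AddCommGroup X] [Module ℝ X] (q : X → ℝ)
    (hq0 : ∀ x, 0 ≤ q x)
    (hqh : ∀ (t : ℝ) (x : X), 0 ≤ t → q (t • x) = t * q x)
    (hqtri : ∀ x y, q (x + y) ≤ q x + q y)
    (K : Set X) (hK : @IsCompact X (tauQ q) K) :
    @IsClosed X (tauQs q) (K + theta0 q) := by
  have hq00 : q 0 = 0 := by simpa using hqh 0 0 le_rfl
  rcases K.eq_empty_or_nonempty with rfl | hKne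
  · rw [empty_add]
    exact @isClosed_empty X (tauQs q)
  rw [← @isOpen_compl_iff X _ (tauQs q)]
  refine isOpen_tauQs_of_forall_ball_subset hq00 fun x hx => ?_
  obtain ⟨δ, hδ, hδK⟩ := exists_pos_le_of_notMem_add_theta0 hq0 hq00 hqtri hK hKne hx
  refine ⟨δ, hδ, fun y hy ⟨k, hk, w, hw, hkw⟩ => (hδK k hk).not_gt ?_⟩
  have hyk : q (y - k) = 0 := by rwa [← hkw, add_sub_cancel_left]
  calc q (x - k) ≤ q (x - y) + q (y - k) := triangle_sub hqtri x y k
    _ = q (x - y) := by rw [hyk, add_zero]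
    _ ≤ qs q (y - x) := apply_sub_le_qs_sub x y
    _ < δ := hy

theorem stmt13 {X : Type*} [AddCommGroup X] [Module ℝ X] (q : X → ℝ)
    (hq0 : ∀ x, 0 ≤ q x)
    (hqh : ∀ (t : ℝ) (x : X), 0 ≤ t → q (t • x) = t * q x)
    (hqtri : ∀ x y, q (x + y) ≤ q x + q y)
    (hqsep : ∀ x, (q x = 0 ∧ q (-x) = 0) ↔ x = 0)
    (K : Set X) (hK : @IsCompact X (tauQ q) K) :
    @IsClosed X (tauQs q) (K + theta0 q) :=
  stmt13_general q hq0 hqh hqtri K hK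
end

section
/- If K ⊆ X is a q-compact convex set, then every extreme point of the convex set K + θ(0) belongs to K. -/
open Set Pointwise

/- A point `k + w` of `A + C` is the midpoint of `k` and `k + 2w`, both of which lie in `A + C`
because `C` is a cone; extremality forces `k + w = k`. -/
theorem IsExtremePt.mem_of_add_cone {X : Type*} [AddCommGroup X] [Module ℝ X] {A C : Set X}
    (hC : ∀ t : ℝ, 0 ≤ t → ∀ w ∈ C, t • w ∈ C) {x : X} (hx : IsExtremePt (A + C) x) :
    x ∈ A := by
  obtain ⟨⟨k, hk, w, hw, rfl⟩, hext⟩ := hx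
  have hk_mem : k ∈ A + C := ⟨k, hk, 0, by simpa using hC 0 le_rfl w hw, add_zero k⟩
  have hk2w_mem : k + (2 : ℝ) • w ∈ A + C := add_mem_add hk (hC 2 zero_le_two w hw)
  have hmid : k + w = (1 / 2 : ℝ) • k + (1 - 1 / 2 : ℝ) • (k + (2 : ℝ) • w) := by module
  rw [(hext k hk_mem _ hk2w_mem (1 / 2) one_half_pos one_half_lt_one hmid).1]
  exact hk

theorem smul_mem_theta0 {X : Type*} [AddCommGroup X] [Module ℝ X] {q : X → ℝ}
    (hqh : ∀ (t : ℝ) (x : X), 0 ≤ t → q (t • x) = t * q x) {t : ℝ} (ht : 0 ≤ t) {w : X}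
    (hw : w ∈ theta0 q) : t • w ∈ theta0 q := by
  show q (t • w) = 0
  rw [hqh t w ht, show q w = 0 from hw, mul_zero]

theorem stmt14_general {X : Type*} [AddCommGroup X] [Module ℝ X] (q : X → ℝ)
    (hqh : ∀ (t : ℝ) (x : X), 0 ≤ t → q (t • x) = t * q x)
    (K : Set X) :
    ∀ x, IsExtremePt (K + theta0 q) x → x ∈ K :=
  fun _ hx => hx.mem_of_add_cone fun _ ht _ hw => smul_mem_theta0 hqh ht hw

theorem stmt14 {X : Type*} [AddCommGroup X] [Module ℝ X] (q : X → ℝ)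
    (hq0 : ∀ x, 0 ≤ q x)
    (hqh : ∀ (t : ℝ) (x : X), 0 ≤ t → q (t • x) = t * q x)
    (hqtri : ∀ x y, q (x + y) ≤ q x + q y)
    (hqsep : ∀ x, (q x = 0 ∧ q (-x) = 0) ↔ x = 0)
    (K : Set X) (hK : @IsCompact X (tauQ q) K) (hconv : Convex ℝ K) :
    ∀ x, IsExtremePt (K + theta0 q) x → x ∈ K :=
  stmt14_general q hqh K
end

section
/- Let X be finite dimensional over ℝ and let K ⊆ X be a nonempty q-compact convex set. Let E(K) denote the set of extreme points of K + θ(0) and S(K) the convex hull of E(K). Then S(K) ⊆ K ⊆ S(K) + θ(0), and moreover S(K) + θ(0) = K + θ(0). -/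
open Set Pointwise

/-!
`A = K + θ(0)` is closed and convex, and its recession cone lies in `θ(0)`, which contains no line
by the separation axiom. Both facts come from the `τ_q`-compactness of `K`, on which `q` is upper
semicontinuous and `k ↦ q (x - k)` lower semicontinuous. By Klee's theorem such a set is the convex
hull of its extreme points plus its recession cone. Klee's theorem goes by induction on the
dimension: a non-interior point of `A` lies in a lower-dimensional closed convex set (the affine
span of `A`, or a supporting face `A ∩ {f = max f}`) whose extreme points are extreme in `A`;
through an interior point, a line leaves the line-free set `A` in at least one direction, so the
point is a convex combination of two boundary points, or a boundary point plus a recession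
direction. Finally every extreme point `k + c` of `A` equals `k`, being the midpoint of `k` and
`k + 2c`.
-/

section RecessionCone

variable {E : Type*} [AddCommGroup E] [Module ℝ E]

def recessionCone (A : Set E) : Set E :=
  {v | ∀ x ∈ A, ∀ t : ℝ, 0 ≤ t → x + t • v ∈ A}

theorem zero_mem_recessionCone (A : Set E) : (0 : E) ∈ recessionCone A := by
  intro x hx t _
  simpa using hx

theorem add_mem_recessionCone {A : Set E} {v w : E} (hv : v ∈ recessionCone A)
    (hw : w ∈ recessionCone A) : v + w ∈ recessionCone A := by
  intro x hx t ht
  simpa [smul_add, add_assoc] using hw _ (hv x hx t ht) t ht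

theorem smul_mem_recessionCone {A : Set E} {v : E} (hv : v ∈ recessionCone A) {c : ℝ}
    (hc : 0 ≤ c) : c • v ∈ recessionCone A := by
  intro x hx t ht
  simpa [smul_smul] using hv x hx (t * c) (mul_nonneg ht hc)

theorem convex_recessionCone (A : Set E) : Convex ℝ (recessionCone A) :=
  fun _ hv _ hw _ _ ha hb _ => add_mem_recessionCone (smul_mem_recessionCone hv ha)
    (smul_mem_recessionCone hw hb)

theorem exists_notMem_recessionCone [Nontrivial E] {A : Set E}
    (hpt : ∀ v ∈ recessionCone A, -v ∈ recessionCone A → v = 0) :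
    ∃ u, u ∉ recessionCone A := by
  obtain ⟨v, hv⟩ := exists_ne (0 : E)
  by_cases hvA : v ∈ recessionCone A
  · exact ⟨-v, fun hnv => hv (hpt v hvA hnv)⟩
  · exact ⟨v, hvA⟩

theorem setOf_isExtremePt (A : Set E) : {x | IsExtremePt A x} = A.extremePoints ℝ := by
  ext x
  simp only [IsExtremePt, mem_extremePoints, openSegment]
  refine and_congr_right fun _ => ⟨?_, ?_⟩
  · rintro h y hy z hz ⟨a, b, ha, hb, hab, rfl⟩
    obtain ⟨h1, h2⟩ := h y hy z hz a ha (by linarith) (by rw [← hab]; abel_nf)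
    exact ⟨h1.symm, h2.symm⟩
  · intro h y hy z hz l hl0 hl1 hx
    obtain ⟨h1, h2⟩ := h y hy z hz ⟨l, 1 - l, hl0, by linarith, by ring, hx.symm⟩
    exact ⟨h1.symm, h2.symm⟩

end RecessionCone

section AffineImage

variable {E F : Type*} [AddCommGroup E] [Module ℝ E] [AddCommGroup F] [Module ℝ F]
  (φ : F →ᵃ[ℝ] E)

theorem AffineMap.image_extremePoints_subset (hφ : Function.Injective φ) (B : Set F) :
    φ '' B.extremePoints ℝ ⊆ (φ '' B).extremePoints ℝ := by
  rintro _ ⟨b, hb, rfl⟩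
  refine ⟨mem_image_of_mem φ hb.1, ?_⟩
  rintro _ ⟨b₁, hb₁, rfl⟩ _ ⟨b₂, hb₂, rfl⟩ hseg
  rw [← image_openSegment, hφ.mem_set_image] at hseg
  exact congrArg φ (hb.2 hb₁ hb₂ hseg)

theorem AffineMap.map_add_linear (x v : F) : φ (x + v) = φ x + φ.linear v := by
  rw [add_comm x, ← vadd_eq_add, φ.map_vadd, vadd_eq_add, add_comm]

theorem AffineMap.image_linear_recessionCone_subset (B : Set F) :
    φ.linear '' recessionCone B ⊆ recessionCone (φ '' B) := by
  rintro _ ⟨w, hw, rfl⟩ _ ⟨b, hb, rfl⟩ t ht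
  exact ⟨b + t • w, hw b hb t ht, by rw [φ.map_add_linear, map_smul]⟩

theorem AffineMap.image_subset_convexHull_extremePoints_add_recessionCone
    (hφ : Function.Injective φ) {B : Set F}
    (hB : B ⊆ convexHull ℝ (B.extremePoints ℝ) + recessionCone B) :
    φ '' B ⊆ convexHull ℝ ((φ '' B).extremePoints ℝ) + recessionCone (φ '' B) := by
  rintro _ ⟨b, hb, rfl⟩
  obtain ⟨c, hc, r, hr, rfl⟩ := hB hb
  refine ⟨φ c, ?_, φ.linear r, φ.image_linear_recessionCone_subset B ⟨r, hr, rfl⟩,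
    (φ.map_add_linear c r).symm⟩
  refine convexHull_mono (φ.image_extremePoints_subset hφ B) ?_
  rw [← φ.image_convexHull]
  exact mem_image_of_mem φ hc

end AffineImage

section Ray

variable {E : Type*} [NormedAddCommGroup E] [NormedSpace ℝ E] {A : Set E}

/-- `y + t • v` is the limit of `(1 - t / s) • y + (t / s) • (x₀ + s • v) ∈ A` as `s → ∞`. -/
theorem IsClosed.mem_recessionCone_of_ray (hA : IsClosed A) (hconv : Convex ℝ A) {x₀ v : E}
    (hray : ∀ t : ℝ, 0 ≤ t → x₀ + t • v ∈ A) : v ∈ recessionCone A := by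
  intro y hy t ht
  have hlim : Filter.Tendsto (fun s : ℝ => y + t • v + (t / s) • (x₀ - y)) Filter.atTop
      (nhds (y + t • v)) := by
    simpa using tendsto_const_nhds.add
      ((tendsto_const_nhds (x := t)).div_atTop Filter.tendsto_id |>.smul_const (x₀ - y))
  refine hA.mem_of_tendsto hlim ?_
  filter_upwards [Filter.eventually_gt_atTop t, Filter.eventually_gt_atTop 0] with s hts hs
  have hcomb := hconv hy (hray s hs.le) (sub_nonneg.2 ((div_le_one hs).2 hts.le))
    (div_nonneg ht hs.le) (sub_add_cancel 1 (t / s))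
  convert hcomb using 1
  rw [smul_add, smul_smul, div_mul_cancel₀ t hs.ne']
  module

theorem IsClosed.exists_mem_sdiff_interior_of_notMem_recessionCone (hA : IsClosed A)
    (hconv : Convex ℝ A) {x v : E} (hx : x ∈ A) (hv : v ∉ recessionCone A) :
    ∃ t : ℝ, 0 ≤ t ∧ x + t • v ∈ A \ interior A := by
  have hcont : Continuous fun t : ℝ => x + t • v := by fun_prop
  set T := (fun t : ℝ => x + t • v) ⁻¹' A ∩ Ici 0
  have hT : IsClosed T := (hA.preimage hcont).inter isClosed_Ici
  have hTconv : OrdConnected T := by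
    have hline : (fun t : ℝ => x + t • v) = AffineMap.lineMap x (x + v) := by
      ext t; simp [AffineMap.lineMap_apply, add_comm]
    rw [show T = _ ∩ _ from rfl, hline]
    exact ((hconv.affine_preimage _).inter (convex_Ici 0)).ordConnected
  have h0 : (0 : ℝ) ∈ T := ⟨by simpa using hx, le_refl (0 : ℝ)⟩
  obtain ⟨s, hs, hsT⟩ : ∃ s : ℝ, 0 ≤ s ∧ x + s • v ∉ A := by
    by_contra! h
    exact hv (hA.mem_recessionCone_of_ray hconv h)
  have hTs : ∀ t ∈ T, t ≤ s := fun t ht => le_of_not_ge fun hst =>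
    hsT (hTconv.out h0 ht ⟨hs, hst⟩).1
  have hbdd : BddAbove T := ⟨s, hTs⟩
  obtain ⟨hbA, hb0 : 0 ≤ sSup T⟩ : sSup T ∈ T := hT.csSup_mem ⟨0, h0⟩ hbdd
  refine ⟨sSup T, hb0, hbA, fun hint => ?_⟩
  obtain ⟨ε, hε, hball⟩ := Metric.isOpen_iff.1 (isOpen_interior.preimage hcont) _ hint
  have hmem : sSup T + ε / 2 ∈ T := by
    refine ⟨interior_subset (s := A) (hball ?_), by simp only [mem_Ici]; linarith⟩
    rw [Metric.mem_ball, Real.dist_eq, add_sub_cancel_left, abs_of_pos (half_pos hε)]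
    exact half_lt_self hε
  linarith [le_csSup hbdd hmem]

theorem IsClosed.mem_convexHull_extremePoints_add_recessionCone_of_mem_interior
    (hbdry : ∀ y ∈ A, y ∉ interior A → y ∈ convexHull ℝ (A.extremePoints ℝ) + recessionCone A)
    (hA : IsClosed A) (hconv : Convex ℝ A) {x u : E} (hx : x ∈ interior A)
    (hu : u ∉ recessionCone A) : x ∈ convexHull ℝ (A.extremePoints ℝ) + recessionCone A := by
  obtain ⟨t, ht, hyA, hyi⟩ :=
    hA.exists_mem_sdiff_interior_of_notMem_recessionCone hconv (interior_subset hx) hu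
  have hy := hbdry _ hyA hyi
  by_cases hnu : -u ∈ recessionCone A
  · obtain ⟨c, hc, r, hr, hcr⟩ := hy
    refine ⟨c, hc, r + t • -u, add_mem_recessionCone hr (smul_mem_recessionCone hnu ht), ?_⟩
    simp only at hcr ⊢
    rw [← add_assoc, hcr]
    module
  obtain ⟨s, hs, hzA, hzi⟩ :=
    hA.exists_mem_sdiff_interior_of_notMem_recessionCone hconv (interior_subset hx) hnu
  have hz := hbdry _ hzA hzi
  have ht0 : 0 < t := ht.lt_of_ne fun h => hyi (by rwa [← h, zero_smul, add_zero])
  have hs0 : 0 < s := hs.lt_of_ne fun h => hzi (by rwa [← h, zero_smul, add_zero])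
  have hR : Convex ℝ (convexHull ℝ (A.extremePoints ℝ) + recessionCone A) :=
    (convex_convexHull ℝ _).add (convex_recessionCone A)
  have hst : 0 < s + t := by positivity
  -- `x` lies between `y = x + t • u` and `z = x - s • u`
  convert hR hy hz (div_nonneg hs hst.le) (div_nonneg ht hst.le)
    (by field_simp : s / (s + t) + t / (s + t) = 1) using 1
  match_scalars <;> field_simp
  ring

end Ray

section Klee

variable {E : Type*} [NormedAddCommGroup E] [NormedSpace ℝ E] [FiniteDimensional ℝ E]

theorem subset_convexHull_extremePoints_add_recessionCone_of_forall_sub_mem (W : Submodule ℝ E)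
    (hW : ∀ B : Set W, IsClosed B → Convex ℝ B →
      (∀ v ∈ recessionCone B, -v ∈ recessionCone B → v = 0) →
      B ⊆ convexHull ℝ (B.extremePoints ℝ) + recessionCone B)
    {A : Set E} (hA : IsClosed A) (hconv : Convex ℝ A)
    (hpt : ∀ v ∈ recessionCone A, -v ∈ recessionCone A → v = 0)
    {x₀ : E} (hAW : ∀ a ∈ A, a - x₀ ∈ W) :
    A ⊆ convexHull ℝ (A.extremePoints ℝ) + recessionCone A := by
  set φ : W →ᵃ[ℝ] E := (AffineEquiv.constVAdd ℝ E x₀).toAffineMap.comp W.subtype.toAffineMap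
  have hφ : Function.Injective φ := fun v w h => Subtype.ext (by simpa [φ] using h)
  have hAφ : φ '' (φ ⁻¹' A) = A := by
    refine image_preimage_eq_of_subset fun a ha => ⟨⟨a - x₀, hAW a ha⟩, ?_⟩
    simp [φ]
  rw [← hAφ]
  refine φ.image_subset_convexHull_extremePoints_add_recessionCone hφ (hW _
    (hA.preimage φ.continuous_of_finiteDimensional) (hconv.affine_preimage φ) fun v hv hnv => ?_)
  have hrec := φ.image_linear_recessionCone_subset (φ ⁻¹' A)
  rw [hAφ] at hrec
  refine (φ.linear_injective_iff.2 hφ) ?_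
  rw [map_zero]
  refine hpt _ (hrec ⟨v, hv, rfl⟩) ?_
  rw [← map_neg]
  exact hrec ⟨-v, hnv, rfl⟩

theorem IsClosed.mem_convexHull_extremePoints_add_recessionCone_of_notMem_interior
    (hface : ∀ F : Set E, IsClosed F → Convex ℝ F →
      (∀ v ∈ recessionCone F, -v ∈ recessionCone F → v = 0) →
      ∀ W : Submodule ℝ E, W ≠ ⊤ → ∀ x₀, (∀ a ∈ F, a - x₀ ∈ W) →
      F ⊆ convexHull ℝ (F.extremePoints ℝ) + recessionCone F)
    {A : Set E} (hA : IsClosed A) (hconv : Convex ℝ A)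
    (hpt : ∀ v ∈ recessionCone A, -v ∈ recessionCone A → v = 0) {x : E} (hx : x ∈ A)
    (hxi : x ∉ interior A) : x ∈ convexHull ℝ (A.extremePoints ℝ) + recessionCone A := by
  rcases (interior A).eq_empty_or_nonempty with hint | hint
  · have hW : vectorSpan ℝ A ≠ ⊤ := by
      rw [Ne, ← AffineSubspace.affineSpan_eq_top_iff_vectorSpan_eq_top_of_nonempty ℝ E E ⟨x, hx⟩,
        ← hconv.interior_nonempty_iff_affineSpan_eq_top, hint]
      exact not_nonempty_empty
    exact hface A hA hconv hpt _ hW x (fun a ha => vsub_mem_vectorSpan ℝ ha hx) hx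
  obtain ⟨f, u, hf0, hfA, hfx⟩ := geometric_hahn_banach_of_nonempty_interior hconv
    (convex_singleton x) (disjoint_singleton_right.2 hxi) hint (singleton_nonempty x)
  have hmax : ∀ a ∈ A, f a ≤ f x := fun a ha => (hfA a ha).trans (hfx x rfl)
  have hexp : IsExposed ℝ A (f.toExposed A) := ContinuousLinearMap.toExposed.isExposed
  have hxF : x ∈ f.toExposed A := ⟨hx, hmax⟩
  have hrec : recessionCone (f.toExposed A) ⊆ recessionCone A := fun v hv =>
    hA.mem_recessionCone_of_ray hconv fun t ht => (hv x hxF t ht).1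
  have hker : LinearMap.ker (f : E →ₗ[ℝ] ℝ) ≠ ⊤ := by
    rw [Ne, LinearMap.ker_eq_top, ← ContinuousLinearMap.toLinearMap_zero]
    exact ContinuousLinearMap.coe_injective.ne hf0
  have hFW : ∀ a ∈ f.toExposed A, a - x ∈ LinearMap.ker (f : E →ₗ[ℝ] ℝ) := fun a ha => by
    simp [le_antisymm (hmax a ha.1) (ha.2 x hx)]
  refine add_subset_add (convexHull_mono hexp.isExtreme.extremePoints_subset_extremePoints) hrec
    (hface _ (hexp.isClosed hA) (hexp.convex hconv) (fun v hv hnv => hpt v (hrec hv) (hrec hnv))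
      _ hker x hFW hxF)

end Klee

theorem IsClosed.subset_convexHull_extremePoints_add_recessionCone {E : Type*}
    [NormedAddCommGroup E] [NormedSpace ℝ E] [FiniteDimensional ℝ E] {A : Set E}
    (hA : IsClosed A) (hconv : Convex ℝ A)
    (hpt : ∀ v ∈ recessionCone A, -v ∈ recessionCone A → v = 0) :
    A ⊆ convexHull ℝ (A.extremePoints ℝ) + recessionCone A := by
  induction hn : Module.finrank ℝ E using Nat.strong_induction_on generalizing E with
  | _ n IH =>
  have hbdry : ∀ y ∈ A, y ∉ interior A →
      y ∈ convexHull ℝ (A.extremePoints ℝ) + recessionCone A := by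
    refine fun y => hA.mem_convexHull_extremePoints_add_recessionCone_of_notMem_interior
      (fun F hF hFconv hFpt W hW x₀ hFW => ?_) hconv hpt
    exact subset_convexHull_extremePoints_add_recessionCone_of_forall_sub_mem W
      (fun B hB hBconv hBpt => IH _ (hn ▸ Submodule.finrank_lt hW) hB hBconv hBpt rfl)
      hF hFconv hFpt hFW
  intro x hx
  by_cases hxi : x ∈ interior A
  · rcases subsingleton_or_nontrivial E with hE | hE
    · exact ⟨x, subset_convexHull ℝ _ (by rwa [extremePoints_eq_self]), 0,
        zero_mem_recessionCone A, add_zero x⟩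
    obtain ⟨u, hu⟩ := exists_notMem_recessionCone hpt
    exact hA.mem_convexHull_extremePoints_add_recessionCone_of_mem_interior hbdry
      hconv hxi hu
  · exact hbdry x hx hxi

section AsymmetricNorm

variable {X : Type*} [AddCommGroup X] {q : X → ℝ}

theorem add_mem_theta0 (hq0 : ∀ x, 0 ≤ q x) (hqtri : ∀ x y, q (x + y) ≤ q x + q y) {u v : X}
    (hu : u ∈ theta0 q) (hv : v ∈ theta0 q) : u + v ∈ theta0 q :=
  le_antisymm ((hqtri u v).trans_eq (by rw [hu, hv, add_zero])) (hq0 _)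

theorem add_theta0_subset (hq0 : ∀ x, 0 ≤ q x) (hqtri : ∀ x y, q (x + y) ≤ q x + q y) :
    theta0 q + theta0 q ⊆ theta0 q :=
  add_subset_iff.2 fun _ hu _ hv => add_mem_theta0 hq0 hqtri hu hv

theorem mem_add_theta0_iff {K : Set X} {x : X} :
    x ∈ K + theta0 q ↔ ∃ k ∈ K, q (x - k) = 0 := by
  constructor
  · rintro ⟨k, hk, c, hc, rfl⟩
    exact ⟨k, hk, by rwa [add_sub_cancel_left]⟩
  · rintro ⟨k, hk, hxk⟩
    exact ⟨k, hk, x - k, hxk, add_sub_cancel k x⟩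

variable [Module ℝ X]

theorem map_zero_of_posHomog (hqh : ∀ (t : ℝ) (x : X), 0 ≤ t → q (t • x) = t * q x) :
    q 0 = 0 := by
  simpa using hqh 0 0 le_rfl

theorem smul_mem_theta0_s17 (hqh : ∀ (t : ℝ) (x : X), 0 ≤ t → q (t • x) = t * q x) {u : X}
    (hu : u ∈ theta0 q) {c : ℝ} (hc : 0 ≤ c) : c • u ∈ theta0 q := by
  show q (c • u) = 0
  rw [hqh c u hc, hu, mul_zero]

theorem convex_theta0 (hq0 : ∀ x, 0 ≤ q x)
    (hqh : ∀ (t : ℝ) (x : X), 0 ≤ t → q (t • x) = t * q x)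
    (hqtri : ∀ x y, q (x + y) ≤ q x + q y) : Convex ℝ (theta0 q) :=
  fun _ hu _ hv _ _ ha hb _ =>
    add_mem_theta0 hq0 hqtri (smul_mem_theta0_s17 hqh hu ha) (smul_mem_theta0_s17 hqh hv hb)

theorem subset_add_theta0 (hqh : ∀ (t : ℝ) (x : X), 0 ≤ t → q (t • x) = t * q x) (K : Set X) :
    K ⊆ K + theta0 q :=
  fun k hk => mem_add_theta0_iff.2 ⟨k, hk, by rw [sub_self, map_zero_of_posHomog hqh]⟩

theorem extremePoints_add_theta0_subset
    (hqh : ∀ (t : ℝ) (x : X), 0 ≤ t → q (t • x) = t * q x) (K : Set X) :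
    (K + theta0 q).extremePoints ℝ ⊆ K := by
  rintro _ ⟨⟨k, hk, c, hc, rfl⟩, hext⟩
  have hk2A : k + (2 : ℝ) • c ∈ K + theta0 q := add_mem_add hk (smul_mem_theta0_s17 hqh hc zero_le_two)
  have hmid : k + c ∈ openSegment ℝ k (k + (2 : ℝ) • c) :=
    ⟨1 / 2, 1 / 2, by norm_num, by norm_num, by norm_num, by module⟩
  rw [← hext (subset_add_theta0 hqh K hk) hk2A hmid]
  exact hk

theorem eventually_lt_nhds_tauQ (hqh : ∀ (t : ℝ) (x : X), 0 ≤ t → q (t • x) = t * q x)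
    (x : X) {ε : ℝ} (hε : 0 < ε) : ∀ᶠ y in @nhds X (tauQ q) x, q (y - x) < ε := by
  let := tauQ q
  refine IsOpen.mem_nhds (TopologicalSpace.GenerateOpen.basic _ ⟨x, ε, hε, rfl⟩) ?_
  show q (x - x) < ε
  rwa [sub_self, map_zero_of_posHomog hqh]

theorem upperSemicontinuous_tauQ (hqh : ∀ (t : ℝ) (x : X), 0 ≤ t → q (t • x) = t * q x)
    (hqtri : ∀ x y, q (x + y) ≤ q x + q y) : @UpperSemicontinuous X ℝ (tauQ q) _ q := by
  intro k c hc
  filter_upwards [eventually_lt_nhds_tauQ hqh k (sub_pos.2 hc)] with y hy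
  linarith [sub_add_cancel y k ▸ hqtri (y - k) k]

theorem lowerSemicontinuous_tauQ_sub (hqh : ∀ (t : ℝ) (x : X), 0 ≤ t → q (t • x) = t * q x)
    (hqtri : ∀ x y, q (x + y) ≤ q x + q y) (x : X) :
    @LowerSemicontinuous X ℝ (tauQ q) _ fun k => q (x - k) := by
  intro k c hc
  filter_upwards [eventually_lt_nhds_tauQ hqh k (sub_pos.2 hc)] with y hy
  have := hqtri (x - y) (y - k)
  rw [sub_add_sub_cancel] at this
  linarith

theorem recessionCone_add_theta0_subset (hq0 : ∀ x, 0 ≤ q x)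
    (hqh : ∀ (t : ℝ) (x : X), 0 ≤ t → q (t • x) = t * q x)
    (hqtri : ∀ x y, q (x + y) ≤ q x + q y) {K : Set X} (hK : @IsCompact X (tauQ q) K)
    {k₀ : X} (hk₀ : k₀ ∈ K) : recessionCone (K + theta0 q) ⊆ theta0 q := by
  let := tauQ q
  obtain ⟨M, hM⟩ :=
    ((upperSemicontinuous_tauQ hqh hqtri).upperSemicontinuousOn K).bddAbove_of_isCompact hK
  intro v hv
  have hbound : ∀ t : ℝ, 0 ≤ t → t * q v ≤ M + q (-k₀) := by
    intro t ht
    obtain ⟨k, hk, hzero⟩ := mem_add_theta0_iff.1 (hv k₀ (subset_add_theta0 hqh K hk₀) t ht)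
    calc t * q v = q ((k₀ + t • v - k) + (k + -k₀)) := by
          rw [← hqh t v ht]; congr 1; abel
      _ ≤ q (k₀ + t • v - k) + (q k + q (-k₀)) := (hqtri _ _).trans (by gcongr; exact hqtri _ _)
      _ ≤ M + q (-k₀) := by linarith [hM ⟨k, hk, rfl⟩]
  refine le_antisymm (le_of_not_gt fun hpos => ?_) (hq0 v)
  have := hbound ((|M + q (-k₀)| + 1) / q v) (by positivity)
  rw [div_mul_cancel₀ _ hpos.ne'] at this
  linarith [le_abs_self (M + q (-k₀))]

end AsymmetricNorm

section NormedAsymmetricNorm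

variable {E : Type*} [NormedAddCommGroup E] [NormedSpace ℝ E] {q : E → ℝ}

theorem continuous_of_posHomog_of_subadditive [FiniteDimensional ℝ E]
    (hqh : ∀ (t : ℝ) (x : E), 0 ≤ t → q (t • x) = t * q x)
    (hqtri : ∀ x y, q (x + y) ≤ q x + q y) : Continuous q := by
  have hconv : ConvexOn ℝ univ q := ⟨convex_univ, fun x _ y _ a b ha hb _ => by
    simpa only [hqh a x ha, hqh b y hb, smul_eq_mul] using hqtri (a • x) (b • y)⟩
  exact hconv.locallyLipschitz.continuous

theorem isClosed_add_theta0 (hq : Continuous q) (hq0 : ∀ x, 0 ≤ q x)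
    (hqh : ∀ (t : ℝ) (x : E), 0 ≤ t → q (t • x) = t * q x)
    (hqtri : ∀ x y, q (x + y) ≤ q x + q y) {K : Set E} (hK : @IsCompact E (tauQ q) K) :
    IsClosed (K + theta0 q) := by
  refine isClosed_of_closure_subset fun x hx => ?_
  have happrox : ∀ ε > 0, ∃ k ∈ K, q (x - k) < ε := by
    intro ε hε
    obtain ⟨a, hxa, ha⟩ := mem_closure_iff.1 hx {y | q (x - y) < ε}
      (isOpen_lt (by fun_prop) continuous_const) (by simpa [map_zero_of_posHomog hqh] using hε)
    obtain ⟨k, hk, hak⟩ := mem_add_theta0_iff.1 ha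
    refine ⟨k, hk, ?_⟩
    calc q (x - k) ≤ q (x - a) + q (a - k) := by
          simpa only [sub_add_sub_cancel] using hqtri (x - a) (a - k)
      _ < ε := by rw [hak, add_zero]; exact hxa
  let := tauQ q
  obtain ⟨k₀, hk₀, -⟩ := happrox 1 one_pos
  obtain ⟨k, hk, hmin⟩ := ((lowerSemicontinuous_tauQ_sub hqh hqtri x).lowerSemicontinuousOn K
    ).exists_isMinOn ⟨k₀, hk₀⟩ hK
  refine mem_add_theta0_iff.2 ⟨k, hk, le_antisymm (le_of_forall_pos_le_add fun ε hε => ?_) (hq0 _)⟩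
  obtain ⟨k', hk', hk'ε⟩ := happrox ε hε
  linarith [isMinOn_iff.1 hmin k' hk']

theorem subset_convexHull_extremePoints_add_theta0 [FiniteDimensional ℝ E] (hq0 : ∀ x, 0 ≤ q x)
    (hqh : ∀ (t : ℝ) (x : E), 0 ≤ t → q (t • x) = t * q x)
    (hqtri : ∀ x y, q (x + y) ≤ q x + q y)
    (hqsep : ∀ x, (q x = 0 ∧ q (-x) = 0) ↔ x = 0)
    {K : Set E} (hK : @IsCompact E (tauQ q) K) (hconv : Convex ℝ K) :
    K ⊆ convexHull ℝ ((K + theta0 q).extremePoints ℝ) + theta0 q := by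
  intro x hx
  have hrec := recessionCone_add_theta0_subset hq0 hqh hqtri hK hx
  have hA := isClosed_add_theta0 (continuous_of_posHomog_of_subadditive hqh hqtri) hq0 hqh hqtri hK
  refine add_subset_add_left hrec (hA.subset_convexHull_extremePoints_add_recessionCone
    (hconv.add (convex_theta0 hq0 hqh hqtri)) (fun v hv hnv => ?_)
      (subset_add_theta0 hqh K hx))
  exact (hqsep v).1 ⟨hrec hv, hrec hnv⟩

end NormedAsymmetricNorm

theorem stmt17_general {X : Type*} [AddCommGroup X] [Module ℝ X] [FiniteDimensional ℝ X] (q : X → ℝ)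
    (hq0 : ∀ x, 0 ≤ q x)
    (hqh : ∀ (t : ℝ) (x : X), 0 ≤ t → q (t • x) = t * q x)
    (hqtri : ∀ x y, q (x + y) ≤ q x + q y)
    (hqsep : ∀ x, (q x = 0 ∧ q (-x) = 0) ↔ x = 0)
    (K : Set X) (hK : @IsCompact X (tauQ q) K) (hconv : Convex ℝ K) :
    convexHull ℝ {x | IsExtremePt (K + theta0 q) x} ⊆ K ∧
    K ⊆ convexHull ℝ {x | IsExtremePt (K + theta0 q) x} + theta0 q ∧
    convexHull ℝ {x | IsExtremePt (K + theta0 q) x} + theta0 q = K + theta0 q := by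
  rw [setOf_isExtremePt]
  have hSK : convexHull ℝ ((K + theta0 q).extremePoints ℝ) ⊆ K :=
    convexHull_min (extremePoints_add_theta0_subset hqh K) hconv
  have hKS : K ⊆ convexHull ℝ ((K + theta0 q).extremePoints ℝ) + theta0 q := by
    let e := (Module.finBasis ℝ X).equivFun
    let : NormedAddCommGroup X := NormedAddCommGroup.induced X _ e e.injective
    let : NormedSpace ℝ X := NormedSpace.induced ℝ X _ e
    exact subset_convexHull_extremePoints_add_theta0 hq0 hqh hqtri hqsep hK hconv
  refine ⟨hSK, hKS, (add_subset_add_right hSK).antisymm ?_⟩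
  calc K + theta0 q ⊆ convexHull ℝ ((K + theta0 q).extremePoints ℝ) + theta0 q + theta0 q :=
        add_subset_add_right hKS
    _ ⊆ convexHull ℝ ((K + theta0 q).extremePoints ℝ) + theta0 q := by
        rw [add_assoc]
        exact add_subset_add_left (add_theta0_subset hq0 hqtri)

theorem stmt17 {X : Type*} [AddCommGroup X] [Module ℝ X] [FiniteDimensional ℝ X] (q : X → ℝ)
    (hq0 : ∀ x, 0 ≤ q x)
    (hqh : ∀ (t : ℝ) (x : X), 0 ≤ t → q (t • x) = t * q x)
    (hqtri : ∀ x y, q (x + y) ≤ q x + q y)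
    (hqsep : ∀ x, (q x = 0 ∧ q (-x) = 0) ↔ x = 0)
    (K : Set X) (hne : K.Nonempty) (hK : @IsCompact X (tauQ q) K) (hconv : Convex ℝ K) :
    convexHull ℝ {x | IsExtremePt (K + theta0 q) x} ⊆ K ∧
    K ⊆ convexHull ℝ {x | IsExtremePt (K + theta0 q) x} + theta0 q ∧
    convexHull ℝ {x | IsExtremePt (K + theta0 q) x} + theta0 q = K + theta0 q :=
  stmt17_general q hq0 hqh hqtri hqsep K hK hconv
end
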